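/- Let r be a nonzero integer and let μ : H_r → Γ_r be the injective homomorphism with μ(g₁) = ((1,0),0), μ(g₂) = ((0,1),0), μ(g₃) = ((0,0),1). Then every group homomorphism φ : H_r → H_r lifts to a unique endomorphism Φ of Γ_r, i.e., there is exactly one group homomorphism Φ : Γ_r → Γ_r with Φ ∘ μ = μ ∘ φ. -/

import Mathlib

/-- `ℤ[r/2]`: the additive subgroup of `ℚ` generated by `1` and `r/2`;
it equals `ℤ` if `r` is even and `(1/2)ℤ` if `r` is odd. -/
def Zr (r : ℤ) : AddSubgroup ℚ := AddSubgroup.closure {1, (r : ℚ) / 2}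

lemma intCast_mem_Zr (r n : ℤ) : (n : ℚ) ∈ Zr r := by
  have h1 : (1 : ℚ) ∈ Zr r := AddSubgroup.subset_closure (by simp)
  simpa using AddSubgroup.zsmul_mem _ h1 n

lemma half_mul_intCast_mem_Zr (r n : ℤ) : (r : ℚ) / 2 * (n : ℚ) ∈ Zr r := by
  have h1 : (r : ℚ) / 2 ∈ Zr r := AddSubgroup.subset_closure (by simp)
  have := AddSubgroup.zsmul_mem _ h1 n
  simpa [zsmul_eq_mul, mul_comm] using this

/-- The group `Γ_r`, with underlying set `ℤ² × ℤ[r/2]` and multiplication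
`(ζ, y)(ζ', y') = (ζ + ζ', y + y' + (r/2) det(ζ, ζ'))`. -/
@[ext]
structure GammaR (r : ℤ) where
  zeta : Fin 2 → ℤ
  y : ℚ
  hy : y ∈ Zr r

namespace GammaR

variable {r : ℤ}

instance : Mul (GammaR r) :=
  ⟨fun a b =>
    ⟨a.zeta + b.zeta,
     a.y + b.y + (r : ℚ) / 2 * ((a.zeta 0 * b.zeta 1 - a.zeta 1 * b.zeta 0 : ℤ) : ℚ),
     add_mem (add_mem a.hy b.hy) (half_mul_intCast_mem_Zr r _)⟩⟩

instance : One (GammaR r) := ⟨⟨0, 0, zero_mem _⟩⟩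

instance : Inv (GammaR r) := ⟨fun a => ⟨-a.zeta, -a.y, neg_mem a.hy⟩⟩

@[simp] lemma mul_zeta (a b : GammaR r) : (a * b).zeta = a.zeta + b.zeta := rfl
@[simp] lemma mul_y (a b : GammaR r) :
    (a * b).y = a.y + b.y + (r : ℚ) / 2 *
      ((a.zeta 0 * b.zeta 1 - a.zeta 1 * b.zeta 0 : ℤ) : ℚ) := rfl
@[simp] lemma one_zeta : (1 : GammaR r).zeta = 0 := rfl
@[simp] lemma one_y : (1 : GammaR r).y = 0 := rfl
@[simp] lemma inv_zeta (a : GammaR r) : a⁻¹.zeta = -a.zeta := rfl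
@[simp] lemma inv_y (a : GammaR r) : a⁻¹.y = -a.y := rfl

instance : Group (GammaR r) where
  mul_assoc a b c := by
    ext
    · simp [add_assoc]
    · simp only [mul_y, mul_zeta, Pi.add_apply]
      push_cast
      ring
  one_mul a := by ext <;> simp
  mul_one a := by ext <;> simp
  inv_mul_cancel a := by
    ext
    · simp
    · simp only [mul_y, inv_y, inv_zeta, Pi.neg_apply, one_y]
      push_cast
      ring

/-- The element `((l₁,l₂), l₃ + l₁l₂r/2)` of `Γ_r`. -/
def elt (r l1 l2 l3 : ℤ) : GammaR r :=
  ⟨![l1, l2], (l3 : ℚ) + (l1 : ℚ) * (l2 : ℚ) * (r : ℚ) / 2, by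
    have h1 := intCast_mem_Zr r l3
    have h2 := half_mul_intCast_mem_Zr r (l1 * l2)
    have : (l3 : ℚ) + (r : ℚ) / 2 * ((l1 * l2 : ℤ) : ℚ) ∈ Zr r := add_mem h1 h2
    convert this using 1
    push_cast
    ring⟩

end GammaR

/-- The relations of the group `H_r`: generators `g₁,g₂,g₃` (indexed by `Fin 3`) and
relations `g₁g₂g₁⁻¹g₂⁻¹ = g₃^{r}`, `g₁g₃ = g₃g₁`, `g₂g₃ = g₃g₂`. -/
def hRels (r : ℤ) : Set (FreeGroup (Fin 3)) :=
  { FreeGroup.of 0 * FreeGroup.of 1 * (FreeGroup.of 0)⁻¹ * (FreeGroup.of 1)⁻¹ *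
      ((FreeGroup.of 2) ^ r)⁻¹,
    FreeGroup.of 0 * FreeGroup.of 2 * (FreeGroup.of 0)⁻¹ * (FreeGroup.of 2)⁻¹,
    FreeGroup.of 1 * FreeGroup.of 2 * (FreeGroup.of 1)⁻¹ * (FreeGroup.of 2)⁻¹ }

/-- The group `H_r`. -/
abbrev Hr (r : ℤ) := PresentedGroup (hRels r)

/-! Squaring is injective on `Γ_r` and every square `g²` lies in `μ(H_r)` (since `2y ∈ ℤ`), so an
endomorphism of `Γ_r` is determined by its values on `μ(g₁), μ(g₂), μ(g₃)`. For existence, put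
`a = μφ(g₁)`, `b = μφ(g₂)`: the map `(ζ, y) ↦ (ζ₁a + ζ₂b, det(a,b)·y + ζ₁·a.y + ζ₂·b.y)` is an
endomorphism sending `μ(g₃)` to `((0,0), det(a,b))`, and this is `μφ(g₃)` because the relation
`[g₁, g₂] = g₃^r` gives `μφ(g₃)^r = [a, b] = ((0,0), r·det(a,b))` and `r ≠ 0`. -/

lemma intCast_mul_mem_Zr {r : ℤ} {y : ℚ} (n : ℤ) (hy : y ∈ Zr r) : (n : ℚ) * y ∈ Zr r := by
  simpa [zsmul_eq_mul] using AddSubgroup.zsmul_mem _ hy n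

lemma exists_eq_intCast_div_two_of_mem_Zr {r : ℤ} {y : ℚ} (h : y ∈ Zr r) :
    ∃ m : ℤ, y = m / 2 := by
  induction h using AddSubgroup.closure_induction with
  | mem x hx =>
    rcases hx with rfl | rfl
    · exact ⟨2, by norm_num⟩
    · exact ⟨r, rfl⟩
  | zero => exact ⟨0, by norm_num⟩
  | add x y _ _ hx hy =>
    obtain ⟨m, rfl⟩ := hx
    obtain ⟨n, rfl⟩ := hy
    exact ⟨m + n, by push_cast; ring⟩
  | neg x _ hx =>
    obtain ⟨m, rfl⟩ := hx
    exact ⟨-m, by push_cast; ring⟩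

namespace GammaR

variable {r : ℤ}

def det (a b : GammaR r) : ℤ := a.zeta 0 * b.zeta 1 - a.zeta 1 * b.zeta 0

@[simp] lemma zpow_zeta (g : GammaR r) (n : ℤ) : (g ^ n).zeta = n • g.zeta := by
  induction n using Int.induction_on with
  | zero => simp
  | succ n ih => rw [zpow_add_one, mul_zeta, ih, add_smul, one_smul]
  | pred n ih => rw [zpow_sub_one, mul_zeta, inv_zeta, ih, sub_smul, one_smul, sub_eq_add_neg]

@[simp] lemma zpow_y (g : GammaR r) (n : ℤ) : (g ^ n).y = n * g.y := by
  induction n using Int.induction_on with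
  | zero => simp
  | succ n ih =>
    rw [zpow_add_one, mul_y, ih, zpow_zeta]
    simp
    ring
  | pred n ih =>
    rw [zpow_sub_one, mul_y, inv_y, inv_zeta, ih, zpow_zeta]
    simp
    ring

lemma commutator_eq (a b : GammaR r) : a * b * a⁻¹ * b⁻¹ = elt r 0 0 (r * det a b) := by
  ext i
  · fin_cases i <;> simp [elt]
  · simp [elt, det]
    ring

lemma eq_elt_det_of_zpow_eq_commutator (hr : r ≠ 0) {a b c : GammaR r}
    (h : c ^ r = a * b * a⁻¹ * b⁻¹) : c = elt r 0 0 (det a b) := by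
  rw [commutator_eq] at h
  ext i
  · have hi := congrFun (congrArg zeta h) i
    fin_cases i <;> simpa [elt, hr] using hi
  · simpa [elt, hr] using congrArg y h

lemma mul_self_injective : Function.Injective fun g : GammaR r => g * g := by
  intro u v h
  have hzeta : u.zeta = v.zeta := by
    funext i
    have := congrFun (congrArg zeta h) i
    simp only [mul_zeta, Pi.add_apply] at this
    omega
  have hy := congrArg y h
  simp only [mul_y, hzeta] at hy
  ext
  · rw [hzeta]
  · linarith

lemma exists_elt_eq_mul_self (g : GammaR r) : ∃ l₁ l₂ l₃ : ℤ, elt r l₁ l₂ l₃ = g * g := by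
  obtain ⟨m, hm⟩ := exists_eq_intCast_div_two_of_mem_Zr g.hy
  refine ⟨2 * g.zeta 0, 2 * g.zeta 1, m - 2 * g.zeta 0 * g.zeta 1 * r, ?_⟩
  ext i
  · fin_cases i <;> simp [elt] <;> ring
  · simp only [elt, mul_y, hm]
    push_cast
    ring

lemma elt_eq_zpow_mul (l₁ l₂ l₃ : ℤ) :
    elt r l₁ l₂ l₃ = elt r 1 0 0 ^ l₁ * elt r 0 1 0 ^ l₂ * elt r 0 0 1 ^ l₃ := by
  ext i
  · fin_cases i <;> simp [elt]
  · simp [elt]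
    ring

lemma hom_ext_elt {G : Type*} [Group G] (hG : Function.Injective fun g : G => g * g)
    {Ψ₁ Ψ₂ : GammaR r →* G} (h₁ : Ψ₁ (elt r 1 0 0) = Ψ₂ (elt r 1 0 0))
    (h₂ : Ψ₁ (elt r 0 1 0) = Ψ₂ (elt r 0 1 0)) (h₃ : Ψ₁ (elt r 0 0 1) = Ψ₂ (elt r 0 0 1)) :
    Ψ₁ = Ψ₂ := by
  ext g
  obtain ⟨l₁, l₂, l₃, hg⟩ := exists_elt_eq_mul_self g
  apply hG
  change Ψ₁ g * Ψ₁ g = Ψ₂ g * Ψ₂ g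
  rw [← map_mul, ← map_mul, ← hg, elt_eq_zpow_mul]
  simp only [map_mul, map_zpow, h₁, h₂, h₃]

def lift (a b : GammaR r) : GammaR r →* GammaR r where
  toFun g := ⟨g.zeta 0 • a.zeta + g.zeta 1 • b.zeta,
    det a b * g.y + g.zeta 0 * a.y + g.zeta 1 * b.y,
    add_mem (add_mem (intCast_mul_mem_Zr _ g.hy) (intCast_mul_mem_Zr _ a.hy))
      (intCast_mul_mem_Zr _ b.hy)⟩
  map_one' := by ext <;> simp
  map_mul' g h := by
    ext i
    · simp only [mul_zeta, Pi.add_apply, Pi.smul_apply, smul_eq_mul]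
      ring
    · simp only [mul_y, mul_zeta, Pi.add_apply, Pi.smul_apply, smul_eq_mul, det]
      push_cast
      ring

@[simp] lemma lift_elt_one_zero_zero (a b : GammaR r) : lift a b (elt r 1 0 0) = a := by
  ext i
  · fin_cases i <;> simp [lift, elt]
  · simp [lift, elt]

@[simp] lemma lift_elt_zero_one_zero (a b : GammaR r) : lift a b (elt r 0 1 0) = b := by
  ext i
  · fin_cases i <;> simp [lift, elt]
  · simp [lift, elt]

@[simp] lemma lift_elt_zero_zero_one (a b : GammaR r) :
    lift a b (elt r 0 0 1) = elt r 0 0 (det a b) := by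
  ext i
  · fin_cases i <;> simp [lift, elt]
  · simp [lift, elt]

end GammaR

lemma Hr.commutator_of_zero_of_one (r : ℤ) :
    (PresentedGroup.of 0 : Hr r) * .of 1 * (.of 0)⁻¹ * (.of 1)⁻¹ = .of 2 ^ r := by
  have h := PresentedGroup.mk_eq_mk_of_mul_inv_mem (rels := hRels r) (Set.mem_insert _ _)
  simp only [map_mul, map_inv, map_zpow] at h
  exact h

theorem stmt_7_general (r : ℤ) (hr : r ≠ 0) (μ : Hr r →* GammaR r)
    (h1 : μ (PresentedGroup.of 0) = GammaR.elt r 1 0 0)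
    (h2 : μ (PresentedGroup.of 1) = GammaR.elt r 0 1 0)
    (h3 : μ (PresentedGroup.of 2) = GammaR.elt r 0 0 1) :
    ∀ φ : Hr r →* Hr r, ∃! Φ : GammaR r →* GammaR r, Φ.comp μ = μ.comp φ := by
  intro φ
  set a := μ (φ (.of 0))
  set b := μ (φ (.of 1))
  have hc : μ (φ (.of 2)) = GammaR.elt r 0 0 (GammaR.det a b) := by
    refine GammaR.eq_elt_det_of_zpow_eq_commutator hr ?_
    simpa only [map_mul, map_inv, map_zpow, MonoidHom.comp_apply] using
      congrArg (μ.comp φ) (Hr.commutator_of_zero_of_one r).symm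
  have hlift : (GammaR.lift a b).comp μ = μ.comp φ := by
    refine PresentedGroup.ext fun i => ?_
    fin_cases i <;> simp [h1, h2, h3, a, b, hc]
  refine ⟨GammaR.lift a b, hlift, fun Ψ hΨ => ?_⟩
  have hΨ' : ∀ x, Ψ (μ x) = GammaR.lift a b (μ x) := fun x =>
    (DFunLike.congr_fun hΨ x).trans (DFunLike.congr_fun hlift x).symm
  refine GammaR.hom_ext_elt GammaR.mul_self_injective ?_ ?_ ?_
  · simpa only [h1] using hΨ' (.of 0)
  · simpa only [h2] using hΨ' (.of 1)
  · simpa only [h3] using hΨ' (.of 2)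

/-- Let `μ : H_r → Γ_r` be the injective homomorphism with `μ(g₁) = ((1,0),0)`,
`μ(g₂) = ((0,1),0)`, `μ(g₃) = ((0,0),1)`. Every group homomorphism `φ : H_r → H_r`
lifts to a unique endomorphism `Φ` of `Γ_r`, i.e. there is exactly one group
homomorphism `Φ : Γ_r → Γ_r` with `Φ ∘ μ = μ ∘ φ`. -/
theorem stmt_7 (r : ℤ) (hr : r ≠ 0) (μ : Hr r →* GammaR r)
    (hinj : Function.Injective μ)
    (h1 : μ (PresentedGroup.of 0) = GammaR.elt r 1 0 0)
    (h2 : μ (PresentedGroup.of 1) = GammaR.elt r 0 1 0)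
    (h3 : μ (PresentedGroup.of 2) = GammaR.elt r 0 0 1) :
    ∀ φ : Hr r →* Hr r, ∃! Φ : GammaR r →* GammaR r, Φ.comp μ = μ.comp φ :=
  stmt_7_general r hr μ h1 h2 h3
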